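/- Let δ > 0 and r > 0, and for each integer j ≥ 1 set x_j = (0,0,δ/j) ∈ ℝ³. Then there exist C > 0 and an integer J ≥ 1, depending only on δ and r, such that for all j ≥ J: ∫_{B_r(0) ∩ {x₃ < 0}} |x| · |∂_{x₃} Φ₀(x, x_j)|² dx ≥ C·log j. In particular these weighted L² integrals of the hypersingular kernel ∇_xΦ₀(x,x_j)·ν(x₀) over the interior half-ball diverge logarithmically as j → ∞, which forces the vanishing of the first and second order derivatives of the refractive index difference at the boundary in the uniqueness proof. -/

import Mathlib

noncomputable section

open Real MeasureTheory Metric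

/-- Euclidean space `ℝ³`. -/
abbrev E3 := EuclideanSpace ℝ (Fin 3)

/-- The fundamental solution `Φ₀(x,y) = 1/(4π|x−y|)` of the Laplacian in `ℝ³`. -/
def Phi0 (x y : E3) : ℝ := 1 / (4 * Real.pi * ‖x - y‖)

/-- The exterior source points `x_j = (0,0,δ/j)`. -/
def xj (δ : ℝ) (j : ℕ) : E3 := EuclideanSpace.single (2 : Fin 3) (δ / j)

/-!
If `0 < ε ≤ t` and `x` lies in the ball of radius `t/2` about `-2t e₃`, then `|x|`, `|x₃ - ε|` and
`|x - ε e₃|` are all comparable to `t`, so the integrand `|x| (x₃ - ε)² / (4π |x - ε e₃|³)²` is of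
order `t⁻³` on a ball of volume of order `t³`: each such ball carries a fixed amount of the
integral. For `ε = δ/j` the balls with `t = 2ᵏ ε`, `k = 0, …, n`, are pairwise disjoint and lie in
the lower half-ball as long as `5 · 2ⁿ ε ≤ 2r`, which allows `n ≈ log₂ j`.
-/

theorem abs_apply_le_norm {ι : Type*} [Fintype ι] (v : EuclideanSpace ℝ ι) (i : ι) :
    |v i| ≤ ‖v‖ :=
  PiLp.norm_apply_le v i

theorem hasFDerivAt_Phi0 {x y : E3} (hxy : x ≠ y) :
    HasFDerivAt (fun z => Phi0 z y) (-(4 * π * ‖x - y‖ ^ 3)⁻¹ • innerSL ℝ (x - y)) x := by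
  have hpos : 0 < ‖x - y‖ := norm_pos_iff.mpr (sub_ne_zero.mpr hxy)
  have hsqrt := (((hasFDerivAt_id x).sub_const y).norm_sq.sqrt (by positivity)).const_mul (4 * π)
  have := (hasDerivAt_inv (by rw [id_eq, sqrt_sq hpos.le]; positivity)).comp_hasFDerivAt x hsqrt
  convert! this using 1
  · ext z
    simp [Phi0, sqrt_sq (norm_nonneg _)]
  · ext v
    simp only [id_eq, sqrt_sq hpos.le, ContinuousLinearMap.comp_id, neg_smul, neg_apply, smul_apply,
      coe_innerSL_apply, smul_eq_mul, nsmul_eq_mul, Nat.cast_ofNat]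
    field_simp

theorem fderiv_Phi0_apply {x y : E3} (hxy : x ≠ y) (v : E3) :
    fderiv ℝ (fun z => Phi0 z y) x v = -inner ℝ (x - y) v / (4 * π * ‖x - y‖ ^ 3) := by
  rw [(hasFDerivAt_Phi0 hxy).fderiv]
  simp only [neg_smul, neg_apply, smul_apply, coe_innerSL_apply, smul_eq_mul]
  ring

def weightedNormalDerivSq (y x : E3) : ℝ :=
  ‖x‖ * |fderiv ℝ (fun z => Phi0 z y) x (EuclideanSpace.single 2 1)| ^ 2

theorem weightedNormalDerivSq_nonneg (y x : E3) : 0 ≤ weightedNormalDerivSq y x := by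
  unfold weightedNormalDerivSq
  positivity

theorem weightedNormalDerivSq_eq {x y : E3} (hxy : x ≠ y) :
    weightedNormalDerivSq y x = ‖x‖ * |(x - y) 2| ^ 2 / (4 * π * ‖x - y‖ ^ 3) ^ 2 := by
  have hpos : 0 < ‖x - y‖ := norm_pos_iff.mpr (sub_ne_zero.mpr hxy)
  rw [weightedNormalDerivSq, fderiv_Phi0_apply hxy, EuclideanSpace.inner_single_right,
    neg_div, abs_neg, abs_div, abs_of_pos (by positivity : 0 < 4 * π * ‖x - y‖ ^ 3)]
  simp only [conj_trivial, one_mul]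
  ring

theorem weightedNormalDerivSq_le {x y : E3} (hxy : x ≠ y) :
    weightedNormalDerivSq y x ≤ ‖x‖ / (4 * π * ‖x - y‖ ^ 2) ^ 2 := by
  have hpos : 0 < ‖x - y‖ := norm_pos_iff.mpr (sub_ne_zero.mpr hxy)
  calc weightedNormalDerivSq y x
      ≤ ‖x‖ * ‖x - y‖ ^ 2 / (4 * π * ‖x - y‖ ^ 3) ^ 2 := by
        rw [weightedNormalDerivSq_eq hxy]
        gcongr
        exact abs_apply_le_norm _ _
    _ = ‖x‖ / (4 * π * ‖x - y‖ ^ 2) ^ 2 := by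
        field_simp

theorem le_norm_sub_single_of_nonpos {x : E3} {ε : ℝ} (hx : x 2 ≤ 0) (hε : 0 ≤ ε) :
    ε ≤ ‖x - EuclideanSpace.single 2 ε‖ :=
  calc ε ≤ |x 2 - ε| := by rw [abs_of_nonpos (by linarith)]; linarith
    _ = |(x - EuclideanSpace.single 2 ε : E3) 2| := by simp
    _ ≤ _ := abs_apply_le_norm _ _

theorem integrableOn_weightedNormalDerivSq {ε : ℝ} (hε : 0 < ε) (R : ℝ) :
    IntegrableOn (weightedNormalDerivSq (EuclideanSpace.single 2 ε))
      (ball 0 R ∩ {x | x 2 < 0}) := by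
  have hmeas : MeasurableSet (ball (0 : E3) R ∩ {x | x 2 < 0}) :=
    measurableSet_ball.inter (measurableSet_lt (by fun_prop) measurable_const)
  refine Measure.integrableOn_of_bounded (M := R / (4 * π * ε ^ 2) ^ 2)
    ((measure_mono Set.inter_subset_left).trans_lt measure_ball_lt_top).ne ?_ ?_
  · exact (measurable_norm.mul
      ((measurable_fderiv_apply_const ℝ _ _).abs.pow_const 2)).aestronglyMeasurable
  · refine ae_restrict_of_forall_mem hmeas fun x ⟨hxR, hx2⟩ => ?_
    have hsep := le_norm_sub_single_of_nonpos (le_of_lt hx2) hε.le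
    have hxy : x ≠ EuclideanSpace.single 2 ε := by
      rw [← sub_ne_zero, ← norm_pos_iff]; linarith
    rw [Real.norm_of_nonneg (weightedNormalDerivSq_nonneg _ _)]
    refine (weightedNormalDerivSq_le hxy).trans ?_
    rw [mem_ball_zero_iff] at hxR
    gcongr
    exact (norm_nonneg x).trans hxR.le

def lowerBall (t : ℝ) : Set E3 := ball (EuclideanSpace.single 2 (-(2 * t))) (t / 2)

theorem bounds_of_mem_lowerBall {t : ℝ} {x : E3} (hx : x ∈ lowerBall t) :
    -(5 * t / 2) < x 2 ∧ x 2 < -(3 * t / 2) ∧ ‖x‖ < 5 * t / 2 := by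
  set c : E3 := EuclideanSpace.single 2 (-(2 * t))
  have hxc : ‖x - c‖ < t / 2 := by rwa [lowerBall, mem_ball, dist_eq_norm] at hx
  have ht : 0 < t := by linarith [norm_nonneg (x - c)]
  have hcoord : |x 2 + 2 * t| < t / 2 :=
    calc |x 2 + 2 * t| = |(x - c) 2| := by simp [c]
      _ ≤ ‖x - c‖ := abs_apply_le_norm _ _
      _ < t / 2 := hxc
  have hc : ‖c‖ = 2 * t := by simp [c, PiLp.norm_single, abs_of_pos ht]
  have hnorm := norm_le_norm_add_norm_sub' x c
  rw [abs_lt] at hcoord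
  exact ⟨by linarith, by linarith, by linarith⟩

theorem lowerBall_subset {t R : ℝ} (htR : 5 * t ≤ 2 * R) :
    lowerBall t ⊆ ball 0 R ∩ {x | x 2 < 0} := by
  intro x hx
  obtain ⟨-, hx2, hxt⟩ := bounds_of_mem_lowerBall hx
  have ht : 0 < t := by linarith [norm_nonneg x]
  exact ⟨mem_ball_zero_iff.mpr (by linarith), show x 2 < 0 by linarith⟩

theorem disjoint_lowerBall {s t : ℝ} (hst : 2 * s ≤ t) : Disjoint (lowerBall s) (lowerBall t) := by
  refine Set.disjoint_left.mpr fun x hxs hxt => ?_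
  obtain ⟨hs, -, -⟩ := bounds_of_mem_lowerBall hxs
  obtain ⟨-, ht, htx⟩ := bounds_of_mem_lowerBall hxt
  linarith [norm_nonneg x]

theorem measureReal_lowerBall {t : ℝ} (ht : 0 ≤ t) :
    volume.real (lowerBall t) = (t / 2) ^ 3 * volume.real (ball (0 : E3) 1) := by
  rw [lowerBall, measureReal_def, Measure.addHaar_ball _ _ (by positivity), ENNReal.toReal_mul,
    ENNReal.toReal_ofReal (by positivity), finrank_euclideanSpace_fin, measureReal_def]

theorem le_weightedNormalDerivSq_of_mem_lowerBall {ε t : ℝ} (hε : 0 ≤ ε) (hεt : ε ≤ t) {x : E3}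
    (hx : x ∈ lowerBall t) :
    t * t ^ 2 / (4 * π * (7 * t / 2) ^ 3) ^ 2 ≤
      weightedNormalDerivSq (EuclideanSpace.single 2 ε) x := by
  obtain ⟨hx2lo, hx2hi, hxt⟩ := bounds_of_mem_lowerBall hx
  have ht : 0 < t := by linarith [norm_nonneg x]
  set y : E3 := EuclideanSpace.single 2 ε
  have hcoord : t ≤ |(x - y) 2| := by
    rw [show (x - y) 2 = x 2 - ε by simp [y], abs_of_neg (by linarith)]
    linarith
  have hxy : x ≠ y := by
    rw [← sub_ne_zero, ← norm_pos_iff]; linarith [abs_apply_le_norm (x - y) 2]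
  have hdist : ‖x - y‖ ≤ 7 * t / 2 :=
    calc ‖x - y‖ ≤ ‖x‖ + ‖y‖ := norm_sub_le x y
      _ ≤ 5 * t / 2 + t := by
        rw [show ‖y‖ = ε by simp [y, PiLp.norm_single, abs_of_nonneg hε]]; linarith
      _ = 7 * t / 2 := by ring
  have hxnorm : t ≤ ‖x‖ := by linarith [abs_apply_le_norm x 2, neg_abs_le (x 2)]
  have hpos : 0 < ‖x - y‖ := norm_pos_iff.mpr (sub_ne_zero.mpr hxy)
  rw [weightedNormalDerivSq_eq hxy]
  gcongr

theorem le_setIntegral_lowerBall {ε t : ℝ} (hε : 0 < ε) (hεt : ε ≤ t) :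
    volume.real (ball (0 : E3) 1) / (8 * (4 * π) ^ 2 * (7 / 2) ^ 6) ≤
      ∫ x in lowerBall t, weightedNormalDerivSq (EuclideanSpace.single 2 ε) x := by
  have ht : 0 < t := hε.trans_le hεt
  have hint := (integrableOn_weightedNormalDerivSq hε (5 * t / 2)).mono_set
    (lowerBall_subset (t := t) (R := 5 * t / 2) (by linarith))
  have := setIntegral_ge_of_const_le (s := lowerBall t) measurableSet_ball measure_ball_lt_top.ne
    (fun x hx => le_weightedNormalDerivSq_of_mem_lowerBall hε.le hεt hx) hint
  rw [measureReal_lowerBall ht.le, smul_eq_mul] at this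
  refine le_of_eq_of_le ?_ this
  field_simp
  ring

theorem card_mul_le_setIntegral_of_pairwiseDisjoint {α ι : Type*} [MeasurableSpace α]
    {μ : Measure α} {f : α → ℝ} {A : Set α} {s : Finset ι} {B : ι → Set α} {c : ℝ}
    (hf : IntegrableOn f A μ) (hf0 : 0 ≤ f) (hB : ∀ i ∈ s, MeasurableSet (B i))
    (hBA : ∀ i ∈ s, B i ⊆ A) (hdisj : (s : Set ι).PairwiseDisjoint B)
    (hc : ∀ i ∈ s, c ≤ ∫ x in B i, f x ∂μ) :
    s.card * c ≤ ∫ x in A, f x ∂μ :=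
  calc s.card * c = ∑ _i ∈ s, c := by rw [Finset.sum_const, nsmul_eq_mul]
    _ ≤ ∑ i ∈ s, ∫ x in B i, f x ∂μ := Finset.sum_le_sum hc
    _ = ∫ x in ⋃ i ∈ s, B i, f x ∂μ :=
      (integral_biUnion_finset s hB hdisj fun i hi => hf.mono_set (hBA i hi)).symm
    _ ≤ ∫ x in A, f x ∂μ :=
      setIntegral_mono_set hf (Filter.Eventually.of_forall hf0)
        (Set.iUnion₂_subset hBA).eventuallyLE

theorem succ_mul_le_setIntegral_weightedNormalDerivSq {ε R : ℝ} (hε : 0 < ε) {n : ℕ}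
    (hn : 5 * (ε * 2 ^ n) ≤ 2 * R) :
    (n + 1) * (volume.real (ball (0 : E3) 1) / (8 * (4 * π) ^ 2 * (7 / 2) ^ 6)) ≤
      ∫ x in ball 0 R ∩ {x | x 2 < 0}, weightedNormalDerivSq (EuclideanSpace.single 2 ε) x := by
  have hdisj : Pairwise (Function.onFun Disjoint fun k : ℕ => lowerBall (ε * 2 ^ k)) :=
    (pairwise_disjoint_on _).mpr fun k l (hkl : k < l) => disjoint_lowerBall <| by
      rw [← mul_assoc, mul_comm 2 ε, mul_assoc, ← pow_succ']
      gcongr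
      · norm_num
      · exact hkl
  have h := card_mul_le_setIntegral_of_pairwiseDisjoint (s := Finset.range (n + 1))
    (integrableOn_weightedNormalDerivSq hε R) (weightedNormalDerivSq_nonneg _)
    (fun _ _ => measurableSet_ball)
    (fun k hk => lowerBall_subset <| by
      have : (2 : ℝ) ^ k ≤ 2 ^ n :=
        pow_le_pow_right₀ one_le_two (Nat.lt_succ_iff.mp (Finset.mem_range.mp hk))
      nlinarith)
    (hdisj.set_pairwise _)
    (fun k _ => le_setIntegral_lowerBall hε (le_mul_of_one_le_right hε.le (one_le_pow₀ one_le_two)))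
  simpa using h

theorem log_le_mul_natLog_sub_add_one {j m : ℕ} (hj : 2 ^ (2 * m) ≤ j) :
    Real.log j ≤ 2 * Real.log 2 * ((Nat.log 2 j - m : ℕ) + 1) := by
  have hj0 : (0 : ℝ) < j := by exact_mod_cast Nat.one_le_two_pow.trans hj
  have hm : 2 * m ≤ Nat.log 2 j := Nat.le_log_of_pow_le one_lt_two hj
  have hlt : (j : ℝ) < 2 ^ (Nat.log 2 j + 1) := by exact_mod_cast Nat.lt_pow_succ_log_self one_lt_two j
  have hcount : (Nat.log 2 j : ℝ) + 1 ≤ 2 * ((Nat.log 2 j - m : ℕ) + 1) := by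
    exact_mod_cast (by omega : Nat.log 2 j + 1 ≤ 2 * (Nat.log 2 j - m + 1))
  calc Real.log j ≤ Real.log (2 ^ (Nat.log 2 j + 1)) := Real.log_le_log hj0 hlt.le
    _ = ((Nat.log 2 j : ℝ) + 1) * Real.log 2 := by rw [Real.log_pow]; push_cast; ring
    _ ≤ _ := by nlinarith [Real.log_pos one_lt_two]

theorem five_mul_div_mul_two_pow_natLog_sub_le {δ r : ℝ} (hr : 0 ≤ r) {m j : ℕ}
    (hm : 5 * δ ≤ 2 ^ m * (2 * r)) (hj : 2 ^ (2 * m) ≤ j) :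
    5 * (δ / j * 2 ^ (Nat.log 2 j - m)) ≤ 2 * r := by
  have hj1 : 1 ≤ j := Nat.one_le_two_pow.trans hj
  have hj0 : (0 : ℝ) < j := by exact_mod_cast hj1
  have hm2 : 2 * m ≤ Nat.log 2 j := Nat.le_log_of_pow_le one_lt_two hj
  have hpow : (2 : ℝ) ^ (Nat.log 2 j - m) * 2 ^ m ≤ j := by
    rw [← pow_add]
    exact_mod_cast (Nat.pow_le_pow_right two_pos (by omega)).trans
      (Nat.pow_log_le_self 2 (by omega))
  rw [div_mul_eq_mul_div, ← mul_div_assoc, div_le_iff₀ hj0]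
  calc 5 * (δ * 2 ^ (Nat.log 2 j - m)) = 5 * δ * 2 ^ (Nat.log 2 j - m) := by ring
    _ ≤ 2 ^ m * (2 * r) * 2 ^ (Nat.log 2 j - m) := by gcongr
    _ = 2 * r * (2 ^ (Nat.log 2 j - m) * 2 ^ m) := by ring
    _ ≤ 2 * r * j := by gcongr

/-- Let `δ > 0` and `r > 0`.  Then there exist `C > 0` and an integer
`J ≥ 1`, depending only on `δ` and `r`, such that for all `j ≥ J`:
`∫_{B_r(0) ∩ {x₃ < 0}} |x|·|∂_{x₃} Φ₀(x, x_j)|² dx ≥ C·log j`.  In particular these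
weighted `L²` integrals of the hypersingular kernel over the interior half-ball diverge
logarithmically as `j → ∞`. -/
theorem hypersingular_weighted_log_growth (δ r : ℝ) (hδ : 0 < δ) (hr : 0 < r) :
    ∃ C > 0, ∃ J : ℕ, 1 ≤ J ∧ ∀ j : ℕ, J ≤ j →
      C * Real.log j ≤
        ∫ x in ball (0 : E3) r ∩ {x : E3 | x 2 < 0},
          ‖x‖ * |fderiv ℝ (fun z => Phi0 z (xj δ j)) x (EuclideanSpace.single 2 1)| ^ 2 := by
  set c := volume.real (ball (0 : E3) 1) / (8 * (4 * π) ^ 2 * (7 / 2) ^ 6)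
  have hc : 0 < c := div_pos (ENNReal.toReal_pos (measure_ball_pos _ _ one_pos).ne'
    measure_ball_lt_top.ne) (by positivity)
  obtain ⟨m, hm⟩ := pow_unbounded_of_one_lt (5 * δ / (2 * r)) one_lt_two
  rw [div_lt_iff₀ (by positivity)] at hm
  refine ⟨c / (2 * Real.log 2), by positivity, 2 ^ (2 * m), Nat.one_le_two_pow, fun j hj => ?_⟩
  have hj0 : (0 : ℝ) < j := by exact_mod_cast Nat.one_le_two_pow.trans hj
  calc c / (2 * Real.log 2) * Real.log j ≤ ((Nat.log 2 j - m : ℕ) + 1) * c := by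
        rw [div_mul_eq_mul_div, div_le_iff₀ (by positivity)]
        nlinarith [log_le_mul_natLog_sub_add_one hj]
    _ ≤ _ := succ_mul_le_setIntegral_weightedNormalDerivSq (div_pos hδ hj0)
        (five_mul_div_mul_two_pow_natLog_sub_le hr.le hm.le hj)
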